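/- Let n ≥ 1, s ≥ 0, τ > 0, κ(τ) = 1 − e^{−τ}, and let S₀(τ) be as above. Then for every Schwartz f, ‖S₀(τ)f‖_{Ḣ^{s+1}(ℝⁿ)} ≲ e^{(1/2)(n/2 − 2 − s)τ} κ(τ)^{−1/2} ‖f‖_{Ḣ^s(ℝⁿ)}, with implicit constant depending only on n. (Smoothing estimate: the semigroup gains one derivative at the cost of a factor κ(τ)^{−1/2}.) -/

import Mathlib

open MeasureTheory

noncomputable section

/-- The heat kernel H_t(x) = (4πt)^{−n/2} e^{−|x|²/(4t)}. -/
def heatK (n : ℕ) (t : ℝ) (x : EuclideanSpace ℝ (Fin n)) : ℝ :=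
  (4 * Real.pi * t) ^ (-(n : ℝ) / 2) * Real.exp (-‖x‖ ^ 2 / (4 * t))

/-- The free semigroup [S₀(τ)f](x) = e^{−τ/2}(H_{κ(τ)} ∗ f)(e^{−τ/2}x), κ(τ) = 1 − e^{−τ}. -/
def S0 (n : ℕ) (τ : ℝ) (f : EuclideanSpace ℝ (Fin n) → ℂ)
    (x : EuclideanSpace ℝ (Fin n)) : ℂ :=
  Real.exp (-τ / 2) * ∫ y : EuclideanSpace ℝ (Fin n),
    ((heatK n (1 - Real.exp (-τ)) (Real.exp (-τ / 2) • x - y) : ℝ) : ℂ) * f y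

/-- Ḣ^s norm. -/
def hnorm (n : ℕ) (s : ℝ) (f : EuclideanSpace ℝ (Fin n) → ℂ) : ℝ :=
  (∫ ξ : EuclideanSpace ℝ (Fin n),
    ‖ξ‖ ^ (2 * s) * ‖FourierTransform.fourier f ξ‖ ^ 2) ^ ((1 : ℝ) / 2)

end

/-! On the Fourier side, `S0 n τ` is multiplication by the heat multiplier `exp (-4π²κ|ξ|²)`,
`κ = 1 - exp (-τ)`, followed by a dilation by `exp (-τ/2)`. After the change of variables
`ξ = exp (-τ/2) • η`, the extra weight `|η|²` is absorbed by the multiplier, since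
`r² exp (-8π²κ r²) ≤ κ⁻¹`; the powers of `exp (-τ/2)` coming from the weight, the dilation and
the Jacobian combine into `exp ((n/2 - 2 - s) τ)`. -/

open FourierTransform Convolution

lemma mul_exp_neg_mul_le_inv {c : ℝ} (hc : 0 < c) (u : ℝ) : u * Real.exp (-(c * u)) ≤ c⁻¹ := by
  have h : c * u ≤ Real.exp (c * u) := by linarith [Real.add_one_le_exp (c * u)]
  rw [Real.exp_neg, ← div_eq_mul_inv, div_le_iff₀ (Real.exp_pos _), le_inv_mul_iff₀ hc]
  exact h

lemma sq_mul_exp_neg_mul_sq_sq_le_inv {κ : ℝ} (hκ : 0 < κ) (r : ℝ) :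
    r ^ 2 * Real.exp (-(4 * Real.pi ^ 2 * κ * r ^ 2)) ^ 2 ≤ κ⁻¹ := by
  have hπ : 1 ≤ 8 * Real.pi ^ 2 := by nlinarith [Real.pi_gt_three]
  rw [← Real.exp_nat_mul, show ((2 : ℕ) : ℝ) * -(4 * Real.pi ^ 2 * κ * r ^ 2)
    = -((8 * Real.pi ^ 2 * κ) * r ^ 2) by push_cast; ring]
  calc r ^ 2 * Real.exp (-((8 * Real.pi ^ 2 * κ) * r ^ 2)) ≤ (8 * Real.pi ^ 2 * κ)⁻¹ :=
        mul_exp_neg_mul_le_inv (by positivity) _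
    _ ≤ κ⁻¹ := inv_anti₀ hκ (by nlinarith)

lemma one_sub_exp_neg_pos {τ : ℝ} (hτ : 0 < τ) : 0 < 1 - Real.exp (-τ) :=
  sub_pos.2 (Real.exp_lt_one_iff.2 (neg_neg_of_pos hτ))

lemma rpow_le_one_add_pow_ceil {x p : ℝ} (hx : 0 ≤ x) (hp : 0 ≤ p) :
    x ^ p ≤ 1 + x ^ ⌈p⌉₊ := by
  rcases le_total x 1 with h | h
  · linarith [Real.rpow_le_one hx h hp, pow_nonneg hx ⌈p⌉₊]
  · calc x ^ p ≤ x ^ (⌈p⌉₊ : ℝ) := Real.rpow_le_rpow_of_exponent_le h (Nat.le_ceil p)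
      _ ≤ 1 + x ^ ⌈p⌉₊ := by rw [Real.rpow_natCast]; linarith

namespace SchwartzMap

variable {D V : Type*} [NormedAddCommGroup D] [NormedSpace ℝ D] [MeasurableSpace D]
  [BorelSpace D] [SecondCountableTopology D] [NormedAddCommGroup V] [NormedSpace ℝ V]
  {μ : Measure D} [μ.HasTemperateGrowth]

lemma integrable_rpow_norm_mul_norm_sq (g : 𝓢(D, V)) {p : ℝ} (hp : 0 ≤ p) :
    Integrable (fun x ↦ ‖x‖ ^ p * ‖g x‖ ^ 2) μ := by
  set M := SchwartzMap.seminorm ℝ 0 0 g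
  refine ((g.integrable_pow_mul μ 0).add (g.integrable_pow_mul μ ⌈p⌉₊)).const_mul M
    |>.mono' ?_ (.of_forall fun x ↦ ?_)
  · exact (continuous_norm.rpow_const fun _ ↦ .inr hp).aestronglyMeasurable.mul
      (g.continuous.norm.pow 2).aestronglyMeasurable
  · have hgM : ‖g x‖ ≤ M := norm_le_seminorm ℝ g x
    rw [Real.norm_of_nonneg (by positivity), Pi.add_apply, pow_zero, one_mul, sq, ← mul_assoc]
    calc ‖x‖ ^ p * ‖g x‖ * ‖g x‖ ≤ (1 + ‖x‖ ^ ⌈p⌉₊) * ‖g x‖ * M := by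
          gcongr
          exact rpow_le_one_add_pow_ceil (norm_nonneg x) hp
      _ = M * (‖g x‖ + ‖x‖ ^ ⌈p⌉₊ * ‖g x‖) := by ring

end SchwartzMap

section Fourier

variable {V E : Type*} [NormedAddCommGroup V] [InnerProductSpace ℝ V] [FiniteDimensional ℝ V]
  [MeasurableSpace V] [BorelSpace V] [NormedAddCommGroup E] [NormedSpace ℂ E]

lemma Real.fourier_comp_smul (h : V → E) {a : ℝ} (ha : 0 < a) (ξ : V) :
    𝓕 (fun x ↦ h (a • x)) ξ = (a ^ Module.finrank ℝ V)⁻¹ • 𝓕 h (a⁻¹ • ξ) := by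
  have hinner (x : V) : inner ℝ (a • x) (a⁻¹ • ξ) = inner ℝ x ξ := by
    rw [real_inner_smul_left, real_inner_smul_right, ← mul_assoc, mul_inv_cancel₀ ha.ne',
      one_mul]
  simp only [Real.fourier_eq]
  rw [← Measure.integral_comp_smul_of_nonneg volume _ a (hR := ha.le)]
  simp only [hinner]

lemma Real.fourier_const_mul (c : ℂ) (h : V → ℂ) (ξ : V) :
    𝓕 (fun x ↦ c * h x) ξ = c * 𝓕 h ξ :=
  congrFun (VectorFourier.fourierIntegral_const_smul _ _ _ h c) ξ

end Fourier

section HeatKernel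

variable {n : ℕ}

lemma heatK_ofReal_eq (t : ℝ) (x : EuclideanSpace ℝ (Fin n)) :
    ((heatK n t x : ℝ) : ℂ) = (((4 * Real.pi * t) ^ (-(n : ℝ) / 2) : ℝ) : ℂ) *
      Complex.exp (-(((4 * t)⁻¹ : ℝ) : ℂ) * (‖x‖ : ℂ) ^ 2) := by
  rw [heatK, Complex.ofReal_mul, Complex.ofReal_exp]
  push_cast
  ring_nf

lemma integrable_heatK {t : ℝ} (ht : 0 < t) :
    Integrable (fun x : EuclideanSpace ℝ (Fin n) ↦ ((heatK n t x : ℝ) : ℂ)) := by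
  simp_rw [heatK_ofReal_eq]
  refine Integrable.const_mul ?_ _
  simpa using GaussianFourier.integrable_cexp_neg_mul_sq_norm_add
    (V := EuclideanSpace ℝ (Fin n)) (b := (((4 * t)⁻¹ : ℝ) : ℂ)) (by simpa using ht) 0 0

lemma fourier_heatK {t : ℝ} (ht : 0 < t) (ξ : EuclideanSpace ℝ (Fin n)) :
    𝓕 (fun x : EuclideanSpace ℝ (Fin n) ↦ ((heatK n t x : ℝ) : ℂ)) ξ =
      ((Real.exp (-(4 * Real.pi ^ 2 * t * ‖ξ‖ ^ 2)) : ℝ) : ℂ) := by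
  have h4πt : 0 < 4 * Real.pi * t := by positivity
  simp_rw [heatK_ofReal_eq]
  rw [Real.fourier_const_mul, fourier_gaussian_innerProductSpace (by simpa using ht),
    finrank_euclideanSpace_fin, Complex.ofReal_cpow h4πt.le, ← mul_assoc]
  have hπ : (Real.pi : ℂ) / (((4 * t)⁻¹ : ℝ) : ℂ) = ((4 * Real.pi * t : ℝ) : ℂ) := by
    push_cast
    field_simp
  rw [hπ, ← Complex.cpow_add _ _ (by exact_mod_cast h4πt.ne'), Complex.ofReal_exp]
  push_cast
  rw [show -(n : ℂ) / 2 + n / 2 = 0 by ring, Complex.cpow_zero, one_mul]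
  congr 1
  field_simp

end HeatKernel

section Semigroup

variable {n : ℕ}

lemma S0_eq_convolution (τ : ℝ) (f : EuclideanSpace ℝ (Fin n) → ℂ) :
    S0 n τ f = fun x ↦ (Real.exp (-τ / 2) : ℂ) *
      (f ⋆[ContinuousLinearMap.mul ℂ ℂ] fun y ↦ ((heatK n (1 - Real.exp (-τ)) y : ℝ) : ℂ))
        (Real.exp (-τ / 2) • x) := by
  ext x
  simp only [S0, convolution_def, ContinuousLinearMap.mul_apply', mul_comm (f _)]

lemma fourier_S0_smul {τ : ℝ} (hτ : 0 < τ) {f : EuclideanSpace ℝ (Fin n) → ℂ}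
    (hf : Integrable f) (η : EuclideanSpace ℝ (Fin n)) :
    𝓕 (S0 n τ f) (Real.exp (-τ / 2) • η) =
      ((Real.exp ((n - 1) * τ / 2) *
        Real.exp (-(4 * Real.pi ^ 2 * (1 - Real.exp (-τ)) * ‖η‖ ^ 2)) : ℝ) : ℂ) * 𝓕 f η := by
  have hκ := one_sub_exp_neg_pos hτ
  have hdil : Real.exp (-τ / 2) * (Real.exp (-τ / 2) ^ n)⁻¹ = Real.exp ((n - 1) * τ / 2) := by
    rw [← Real.exp_nat_mul, ← Real.exp_neg, ← Real.exp_add]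
    ring_nf
  rw [S0_eq_convolution, Real.fourier_const_mul, Real.fourier_comp_smul _ (Real.exp_pos _),
    inv_smul_smul₀ (Real.exp_pos _).ne', Real.fourier_mul_convolution_eq hf (integrable_heatK hκ),
    fourier_heatK hκ, finrank_euclideanSpace_fin, ← hdil, Complex.real_smul]
  push_cast
  ring

lemma weight_mul_norm_fourier_S0_smul_sq_le {τ : ℝ} (hτ : 0 < τ)
    {f : EuclideanSpace ℝ (Fin n) → ℂ} (hf : Integrable f) {s : ℝ} (hs : -1 < s)
    (η : EuclideanSpace ℝ (Fin n)) :
    ‖Real.exp (-τ / 2) • η‖ ^ (2 * (s + 1)) * ‖𝓕 (S0 n τ f) (Real.exp (-τ / 2) • η)‖ ^ 2 ≤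
      Real.exp ((n - 2 - s) * τ) * (1 - Real.exp (-τ))⁻¹ * (‖η‖ ^ (2 * s) * ‖𝓕 f η‖ ^ 2) := by
  have hκ := one_sub_exp_neg_pos hτ
  set G := Real.exp (-(4 * Real.pi ^ 2 * (1 - Real.exp (-τ)) * ‖η‖ ^ 2))
  have hweight : ‖Real.exp (-τ / 2) • η‖ ^ (2 * (s + 1))
      = Real.exp (-(s + 1) * τ) * ‖η‖ ^ (2 * s) * ‖η‖ ^ 2 := by
    rw [norm_smul, Real.norm_of_nonneg (Real.exp_pos _).le,
      Real.mul_rpow (Real.exp_pos _).le (norm_nonneg _), ← Real.exp_mul,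
      show 2 * (s + 1) = 2 * s + (2 : ℕ) by push_cast; ring,
      Real.rpow_add_natCast' (norm_nonneg _) (by push_cast; linarith)]
    ring_nf
  have hmult : ‖𝓕 (S0 n τ f) (Real.exp (-τ / 2) • η)‖ ^ 2
      = Real.exp ((n - 1) * τ) * G ^ 2 * ‖𝓕 f η‖ ^ 2 := by
    rw [fourier_S0_smul hτ hf, norm_mul, Complex.norm_real,
      Real.norm_of_nonneg (by positivity), mul_pow, mul_pow, ← Real.exp_nat_mul,
      show ((2 : ℕ) : ℝ) * ((n - 1) * τ / 2) = (n - 1) * τ by push_cast; ring]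
  calc _ = Real.exp ((n - 2 - s) * τ) * (‖η‖ ^ 2 * G ^ 2) * (‖η‖ ^ (2 * s) * ‖𝓕 f η‖ ^ 2) := by
        rw [hweight, hmult, show (n - 2 - s) * τ = -(s + 1) * τ + (n - 1) * τ by ring,
          Real.exp_add]
        ring
    _ ≤ _ := by gcongr; exact sq_mul_exp_neg_mul_sq_sq_le_inv hκ ‖η‖

lemma integral_weight_fourier_S0_le {τ : ℝ} (hτ : 0 < τ)
    {f : EuclideanSpace ℝ (Fin n) → ℂ} (hf : Integrable f) {s : ℝ} (hs : -1 < s)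
    (hw : Integrable fun η : EuclideanSpace ℝ (Fin n) ↦ ‖η‖ ^ (2 * s) * ‖𝓕 f η‖ ^ 2) :
    ∫ ξ, ‖ξ‖ ^ (2 * (s + 1)) * ‖𝓕 (S0 n τ f) ξ‖ ^ 2 ≤
      Real.exp ((n / 2 - 2 - s) * τ) * (1 - Real.exp (-τ))⁻¹ *
        ∫ η, ‖η‖ ^ (2 * s) * ‖𝓕 f η‖ ^ 2 := by
  set a := Real.exp (-τ / 2)
  have ha : 0 < a := Real.exp_pos _
  have hdilate : ∫ ξ, ‖ξ‖ ^ (2 * (s + 1)) * ‖𝓕 (S0 n τ f) ξ‖ ^ 2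
      = a ^ n * ∫ η, ‖a • η‖ ^ (2 * (s + 1)) * ‖𝓕 (S0 n τ f) (a • η)‖ ^ 2 := by
    rw [Measure.integral_comp_smul_of_nonneg volume
        (fun ξ ↦ ‖ξ‖ ^ (2 * (s + 1)) * ‖𝓕 (S0 n τ f) ξ‖ ^ 2) a (hR := ha.le),
      finrank_euclideanSpace_fin, smul_eq_mul, mul_inv_cancel_left₀ (pow_pos ha n).ne']
  have han : a ^ n * Real.exp ((n - 2 - s) * τ) = Real.exp ((n / 2 - 2 - s) * τ) := by
    rw [← Real.exp_nat_mul, ← Real.exp_add]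
    ring_nf
  calc _ = a ^ n * ∫ η, ‖a • η‖ ^ (2 * (s + 1)) * ‖𝓕 (S0 n τ f) (a • η)‖ ^ 2 := hdilate
    _ ≤ a ^ n * ∫ η, Real.exp ((n - 2 - s) * τ) * (1 - Real.exp (-τ))⁻¹ *
          (‖η‖ ^ (2 * s) * ‖𝓕 f η‖ ^ 2) := by
        refine mul_le_mul_of_nonneg_left ?_ (by positivity)
        exact integral_mono_of_nonneg (.of_forall fun _ ↦ by positivity) (hw.const_mul _)
          (.of_forall (weight_mul_norm_fourier_S0_smul_sq_le hτ hf hs))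
    _ = _ := by rw [integral_const_mul, ← mul_assoc, ← mul_assoc, han]

end Semigroup

theorem S0_smoothing_general (n : ℕ) (s : ℝ) (hs : 0 ≤ s) :
    ∃ C > (0 : ℝ), ∀ τ : ℝ, 0 < τ →
      ∀ f : SchwartzMap (EuclideanSpace ℝ (Fin n)) ℂ,
        hnorm n (s + 1) (S0 n τ f) ≤
          C * Real.exp ((1 / 2) * ((n : ℝ) / 2 - 2 - s) * τ) *
            (1 - Real.exp (-τ)) ^ (-(1 : ℝ) / 2) * hnorm n s f := by
  refine ⟨1, one_pos, fun τ hτ f ↦ ?_⟩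
  have hκ := (one_sub_exp_neg_pos hτ).le
  have hw : Integrable fun η ↦ ‖η‖ ^ (2 * s) * ‖𝓕 (f : EuclideanSpace ℝ (Fin n) → ℂ) η‖ ^ 2 :=
    (𝓕 f).integrable_rpow_norm_mul_norm_sq (by positivity)
  calc hnorm n (s + 1) (S0 n τ f)
      ≤ (Real.exp ((n / 2 - 2 - s) * τ) * (1 - Real.exp (-τ))⁻¹ *
          ∫ η, ‖η‖ ^ (2 * s) * ‖𝓕 (f : EuclideanSpace ℝ (Fin n) → ℂ) η‖ ^ 2) ^ ((1 : ℝ) / 2) :=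
        Real.rpow_le_rpow (integral_nonneg fun _ ↦ by positivity)
          (integral_weight_fourier_S0_le hτ f.integrable (by linarith) hw) (by norm_num)
    _ = _ := by
        rw [Real.mul_rpow (by positivity) (integral_nonneg fun _ ↦ by positivity),
          Real.mul_rpow (Real.exp_pos _).le (inv_nonneg.2 hκ), ← Real.exp_mul,
          Real.inv_rpow hκ, ← Real.rpow_neg hκ, hnorm]
        ring_nf

/-- Smoothing estimate: the free semigroup gains one derivative at the cost of κ(τ)^{−1/2}. -/
theorem S0_smoothing (n : ℕ) (hn : 1 ≤ n) (s : ℝ) (hs : 0 ≤ s) :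
    ∃ C > (0 : ℝ), ∀ τ : ℝ, 0 < τ →
      ∀ f : SchwartzMap (EuclideanSpace ℝ (Fin n)) ℂ,
        hnorm n (s + 1) (S0 n τ f) ≤
          C * Real.exp ((1 / 2) * ((n : ℝ) / 2 - 2 - s) * τ) *
            (1 - Real.exp (-τ)) ^ (-(1 : ℝ) / 2) * hnorm n s f :=
  S0_smoothing_general n s hs
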